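/- Let M be the symmetric block matrix M = [[M₁₁, M₁₂], [M₁₂ᵀ, Λ + R]] of real matrices, where M₁₁ ∈ ℝ^{p×p} is symmetric positive definite, R ∈ ℝ^{m×m} is symmetric, and Λ = diag(λ₁,…,λ_m) is diagonal. Let K := M₁₂ᵀ M₁₁⁻¹ M₁₂. If every diagonal entry satisfies λ_k > -λ_min(R - K), where λ_min(R - K) is the smallest eigenvalue of the symmetric matrix R - K, then M is positive definite. -/

import Mathlib

/-!
Since `M₁₁ ≻ 0`, `M` is positive definite as soon as its Schur complement `Λ + R - K` is.
Writing `μ = λ_min(R - K)`, that complement is the positive diagonal matrix `Λ + μ I` plus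
the positive semidefinite matrix `R - K - μ I`.
-/

open Matrix

namespace Matrix

open scoped MatrixOrder ComplexOrder

variable {n : Type*} [Fintype n] [DecidableEq n] {𝕜 : Type*} [RCLike 𝕜]

theorem IsHermitian.posSemidef_sub_smul_one {A : Matrix n n 𝕜} (hA : A.IsHermitian) {μ : ℝ}
    (h : ∀ i, μ ≤ hA.eigenvalues i) : (A - μ • (1 : Matrix n n 𝕜)).PosSemidef := by
  rw [← Algebra.algebraMap_eq_smul_one, ← le_iff, algebraMap_le_iff_le_spectrum,
    hA.spectrum_real_eq_range_eigenvalues]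
  rintro _ ⟨i, rfl⟩
  exact h i

theorem PosDef.fromBlocks₁₁_of_posDef_schur {m : Type*} [Fintype m] [DecidableEq m]
    {A : Matrix m m 𝕜} {B : Matrix m n 𝕜} {D : Matrix n n 𝕜} (hA : A.PosDef)
    (hS : (D - Bᴴ * A⁻¹ * B).PosDef) :
    (fromBlocks A B Bᴴ D).PosDef := by
  have := hA.isUnit.invertible
  refine ((hA.fromBlocks₁₁ B D).mpr hS.posSemidef).posDef_iff_isUnit.mpr ?_
  rw [isUnit_iff_isUnit_det, det_fromBlocks₁₁, invOf_eq_nonsing_inv]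
  exact (A.isUnit_iff_isUnit_det.mp hA.isUnit).mul ((isUnit_iff_isUnit_det _).mp hS.isUnit)

end Matrix

theorem block_matrix_posDef_of_rates_general {p m : ℕ}
    (M11 : Matrix (Fin p) (Fin p) ℝ) (hM11 : M11.PosDef)
    (M12 : Matrix (Fin p) (Fin m) ℝ)
    (R : Matrix (Fin m) (Fin m) ℝ)
    (lam : Fin m → ℝ)
    (K : Matrix (Fin m) (Fin m) ℝ) (hK : K = M12ᵀ * M11⁻¹ * M12)
    (hRK : (R - K).IsHermitian)
    (hlam : ∀ k, lam k > -(⨅ i, hRK.eigenvalues i)) :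
    (Matrix.fromBlocks M11 M12 M12ᵀ (Matrix.diagonal lam + R)).PosDef := by
  set μ := ⨅ i, hRK.eigenvalues i
  rw [← conjTranspose_eq_transpose_of_trivial]
  refine hM11.fromBlocks₁₁_of_posDef_schur ?_
  have hschur : diagonal lam + R - M12ᴴ * M11⁻¹ * M12 =
      diagonal (fun k ↦ lam k + μ) + (R - K - μ • 1) := by
    rw [conjTranspose_eq_transpose_of_trivial, ← hK, smul_one_eq_diagonal, ← diagonal_add]
    abel
  rw [hschur]
  exact (posDef_diagonal_iff.mpr fun k ↦ by linarith [hlam k]).add_posSemidef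
    (hRK.posSemidef_sub_smul_one fun i ↦ ciInf_le (Finite.bddBelow_range _) i)

/-- Lemma A.1 (1): for the symmetric block matrix
`M = [[M₁₁, M₁₂], [M₁₂ᵀ, Λ + R]]` with `M₁₁ ≻ 0`, `R` symmetric and
`Λ = diag(λ₁,…,λ_m)`, if every `λ_k > -λ_min(R - K)` with
`K = M₁₂ᵀ M₁₁⁻¹ M₁₂`, then `M` is positive definite. -/
theorem block_matrix_posDef_of_rates {p m : ℕ}
    (M11 : Matrix (Fin p) (Fin p) ℝ) (hM11 : M11.PosDef)
    (M12 : Matrix (Fin p) (Fin m) ℝ)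
    (R : Matrix (Fin m) (Fin m) ℝ) (hR : R.IsHermitian)
    (lam : Fin m → ℝ)
    (K : Matrix (Fin m) (Fin m) ℝ) (hK : K = M12ᵀ * M11⁻¹ * M12)
    (hRK : (R - K).IsHermitian)
    (hlam : ∀ k, lam k > -(⨅ i, hRK.eigenvalues i)) :
    (Matrix.fromBlocks M11 M12 M12ᵀ (Matrix.diagonal lam + R)).PosDef :=
  block_matrix_posDef_of_rates_general M11 hM11 M12 R lam K hK hRK hlam
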